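/- Let A : X → Y and A' : X' → Y' be compact operators between Hilbert spaces over ℝ or ℂ, each admitting an infinite-rank singular value decomposition (so both ranges are infinite-dimensional): A x = ∑'_{n∈ℕ} σ(n) ⟪φ(n), x⟫ ψ(n) and A' x = ∑'_{n∈ℕ} σ'(n) ⟪φ'(n), x⟫ ψ'(n). Then the following statements are equivalent: (1) there exist bounded linear operators T : Y → Y' and S : X' → X with A' = T ∘ A ∘ S; (2) there exist a bounded linear operator O : Y → Y' with ‖O y‖ = ‖y‖ for all y in the closure of the range of A, and a bounded linear operator S : X' → X, with A' = O ∘ A ∘ S; (3) there exist a bounded linear operator T : Y → Y' and a bounded linear operator U : X' → X with ‖U x‖ = ‖x‖ for all x in the orthogonal complement of the kernel of A', with A' = T ∘ A ∘ U; (4) there exists a constant C > 0 such that σ'(n) ≤ C σ(n) for all n ∈ ℕ. -/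

import Mathlib

/-!
Through the orthonormal families both operators are diagonal: `A = Ψ ∘ diag σ ∘ Φ*`, where the
synthesis map `Ψ : ℓ² → Y` of `ψ` is an isometry onto the closed span of `ψ` and the analysis map
`Φ*` is the adjoint of the synthesis map of `φ`, so `Φ* ∘ Φ = id`.

If `σ' ≤ C σ`, the sequence `σ' / σ` is bounded and `A' = (Ψ' Ψ*) A (Φ diag (σ'/σ) Φ'*)
= (Ψ' diag (σ'/σ) Ψ*) A (Φ Φ'*)`. Here `Ψ' Ψ*` is isometric on the closed span of `ψ`, which
contains the range of `A`, and `Φ Φ'*` is isometric on the closed span of `φ'`, which contains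
`(ker A')ᗮ`.

Conversely, `A' = T A S` gives `diag σ' = P diag σ Q` with `‖P‖ ≤ ‖T‖` and `‖Q‖ ≤ ‖S‖`. By counting
dimensions there is a nonzero `f` supported on `{0, …, n}` such that `Q f` vanishes on
`{0, …, n - 1}`, and then `σ'ₙ ‖f‖ ≤ ‖diag σ' f‖ ≤ ‖P‖ σₙ ‖Q f‖ ≤ ‖T‖ ‖S‖ σₙ ‖f‖`.
-/

open ContinuousLinearMap Filter
open scoped ENNReal lp InnerProductSpace

noncomputable section

namespace lp

variable {𝕜 ι : Type*} [RCLike 𝕜] {p : ℝ≥0∞}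

theorem norm_le_mul_norm_of_forall_le (hp : p ≠ 0) {f g : ℓ^p(ι, 𝕜)} {r : ℝ} (hr : 0 ≤ r)
    (h : ∀ i, ‖g i‖ ≤ r * ‖f i‖) : ‖g‖ ≤ r * ‖f‖ := by
  simpa [norm_const_smul hp, abs_of_nonneg hr] using
    norm_mono hp (x := g) (y := (r : 𝕜) • f) fun i => by
      simpa [norm_smul, abs_of_nonneg hr] using h i

theorem mul_norm_le_norm_of_forall_le (hp : p ≠ 0) {f g : ℓ^p(ι, 𝕜)} {r : ℝ} (hr : 0 ≤ r)
    (h : ∀ i, r * ‖f i‖ ≤ ‖g i‖) : r * ‖f‖ ≤ ‖g‖ := by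
  simpa [norm_const_smul hp, abs_of_nonneg hr] using
    norm_mono hp (x := (r : 𝕜) • f) (y := g) fun i => by
      simpa [norm_smul, abs_of_nonneg hr] using h i

theorem exists_ne_zero_forall_gt_eq_zero_forall_lt_map_eq_zero
    (Q : ℓ^p(ℕ, 𝕜) →ₗ[𝕜] ℓ^p(ℕ, 𝕜)) (n : ℕ) :
    ∃ f ≠ 0, (∀ j, n < j → f j = 0) ∧ ∀ j < n, Q f j = 0 := by
  let e : (Fin (n + 1) → 𝕜) →ₗ[𝕜] ℓ^p(ℕ, 𝕜) :=
    ∑ k : Fin (n + 1), lsingle p (k : ℕ) ∘ₗ LinearMap.proj k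
  have he : ∀ g j, e g j = ∑ k : Fin (n + 1), if j = k then g k else 0 := by
    intro g j
    have : e g = ∑ k : Fin (n + 1), lp.single p (k : ℕ) (g k) := by simp [e]
    rw [this, coeFn_sum, Finset.sum_apply]
    simp [Pi.single_apply]
  have he_self : ∀ g (k : Fin (n + 1)), e g k = g k := by
    intro g k
    simp [he, Fin.val_inj]
  have he_gt : ∀ g j, n < j → e g j = 0 := by
    intro g j hj
    rw [he]
    exact Finset.sum_eq_zero fun k _ => if_neg (by have := k.isLt; omega)
  let π : ℓ^p(ℕ, 𝕜) →ₗ[𝕜] (Fin n → 𝕜) := LinearMap.pi fun i => evalₗ (fun _ : ℕ => 𝕜) p (i : ℕ)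
  obtain ⟨g, hg, hg0⟩ := Submodule.exists_mem_ne_zero_of_ne_bot
    (LinearMap.ker_ne_bot_of_finrank_lt (f := π ∘ₗ Q ∘ₗ e) (by simp))
  refine ⟨e g, fun h => hg0 (funext fun k => by simpa [he_self] using congr($h k)), he_gt g,
    fun j hj => ?_⟩
  · simpa [π] using congrFun hg ⟨j, hj⟩

theorem exists_eq_mul_of_norm_le_mul_norm {c c' : ℓ^∞(ι, 𝕜)} {C : ℝ} (hc : ∀ i, c i ≠ 0)
    (h : ∀ i, ‖c' i‖ ≤ C * ‖c i‖) : ∃ q : ℓ^∞(ι, 𝕜), c' = c * q := by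
  refine ⟨⟨fun i => c' i / c i, memℓp_infty ⟨C, ?_⟩⟩, ext <| funext fun i => ?_⟩
  · rintro - ⟨i, rfl⟩
    simpa [norm_div, div_le_iff₀ (norm_pos_iff.mpr (hc i))] using h i
  · simp [mul_div_cancel₀ _ (hc i)]

variable [Fact (1 ≤ p)]

def diagonal (c : ℓ^∞(ι, 𝕜)) : ℓ^p(ι, 𝕜) →L[𝕜] ℓ^p(ι, 𝕜) :=
  LinearMap.mkContinuous
    { toFun f := ⟨fun i => c i * f i, ((lp.memℓp f).const_smul (‖c‖ : 𝕜)).mono' fun i => by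
        simpa [norm_smul] using mul_le_mul_of_nonneg_right
          (norm_apply_le_norm ENNReal.top_ne_zero c i) (norm_nonneg (f i))⟩
      map_add' f g := ext <| funext fun i => mul_add _ _ _
      map_smul' a f := ext <| funext fun i => mul_left_comm _ _ _ }
    ‖c‖ fun f => by
      refine norm_le_mul_norm_of_forall_le (zero_lt_one.trans_le Fact.out).ne' (norm_nonneg c)
        fun i => ?_
      simpa using mul_le_mul_of_nonneg_right (norm_apply_le_norm ENNReal.top_ne_zero c i)
        (norm_nonneg (f i))

@[simp]
theorem diagonal_apply (c : ℓ^∞(ι, 𝕜)) (f : ℓ^p(ι, 𝕜)) (i : ι) :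
    diagonal c f i = c i * f i := rfl

theorem diagonal_mul (c d : ℓ^∞(ι, 𝕜)) :
    (diagonal (c * d) : ℓ^p(ι, 𝕜) →L[𝕜] ℓ^p(ι, 𝕜)) = diagonal c ∘L diagonal d := by
  ext f i
  simp [mul_assoc]

@[simp]
theorem diagonal_one : (diagonal 1 : ℓ^p(ι, 𝕜) →L[𝕜] ℓ^p(ι, 𝕜)) = ContinuousLinearMap.id 𝕜 _ := by
  ext f i
  simp

theorem norm_diagonal_le_of_forall_lt_eq_zero {c : ℓ^∞(ℕ, 𝕜)} {n : ℕ} {r : ℝ}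
    (hc : ∀ j, n ≤ j → ‖c j‖ ≤ r) {f : ℓ^p(ℕ, 𝕜)} (hf : ∀ j < n, f j = 0) :
    ‖diagonal c f‖ ≤ r * ‖f‖ := by
  refine norm_le_mul_norm_of_forall_le (zero_lt_one.trans_le Fact.out).ne'
    ((norm_nonneg _).trans (hc n le_rfl)) fun j => ?_
  rcases lt_or_ge j n with hj | hj
  · simp [hf j hj]
  · rw [diagonal_apply, norm_mul]
    exact mul_le_mul_of_nonneg_right (hc j hj) (norm_nonneg _)

theorem mul_norm_le_norm_diagonal_of_forall_gt_eq_zero {c : ℓ^∞(ℕ, 𝕜)} {n : ℕ} {r : ℝ}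
    (hr : 0 ≤ r) (hc : ∀ j ≤ n, r ≤ ‖c j‖) {f : ℓ^p(ℕ, 𝕜)} (hf : ∀ j, n < j → f j = 0) :
    r * ‖f‖ ≤ ‖diagonal c f‖ := by
  refine mul_norm_le_norm_of_forall_le (zero_lt_one.trans_le Fact.out).ne' hr fun j => ?_
  rcases le_or_gt j n with hj | hj
  · rw [diagonal_apply, norm_mul]
    exact mul_le_mul_of_nonneg_right (hc j hj) (norm_nonneg _)
  · simp [hf j hj]

theorem le_norm_mul_norm_mul_of_diagonal_eq_comp {c c' : ℓ^∞(ℕ, 𝕜)} {n : ℕ} {r r' : ℝ}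
    (hc : ∀ j, n ≤ j → ‖c j‖ ≤ r) (hr' : 0 ≤ r') (hc' : ∀ j ≤ n, r' ≤ ‖c' j‖)
    (P Q : ℓ^p(ℕ, 𝕜) →L[𝕜] ℓ^p(ℕ, 𝕜)) (h : diagonal c' = P ∘L diagonal c ∘L Q) :
    r' ≤ ‖P‖ * ‖Q‖ * r := by
  obtain ⟨f, hf0, hf, hQf⟩ :=
    exists_ne_zero_forall_gt_eq_zero_forall_lt_map_eq_zero (Q : ℓ^p(ℕ, 𝕜) →ₗ[𝕜] ℓ^p(ℕ, 𝕜)) n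
  have hr : 0 ≤ r := (norm_nonneg _).trans (hc n le_rfl)
  refine le_of_mul_le_mul_right ?_ (norm_pos_iff.mpr hf0)
  calc r' * ‖f‖ ≤ ‖diagonal c' f‖ := mul_norm_le_norm_diagonal_of_forall_gt_eq_zero hr' hc' hf
    _ = ‖P (diagonal c (Q f))‖ := by rw [h]; rfl
    _ ≤ ‖P‖ * (r * ‖Q f‖) := P.le_opNorm_of_le (norm_diagonal_le_of_forall_lt_eq_zero hc hQf)
    _ ≤ ‖P‖ * (r * (‖Q‖ * ‖f‖)) := by gcongr; exact Q.le_opNorm f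
    _ = ‖P‖ * ‖Q‖ * r * ‖f‖ := by ring

end lp

theorem memℓp_infty_ofReal_of_antitone {𝕜 : Type*} [RCLike 𝕜] {s : ℕ → ℝ} (hs : ∀ n, 0 ≤ s n)
    (hs_anti : Antitone s) : Memℓp (fun n => (s n : 𝕜)) ∞ :=
  memℓp_infty ⟨s 0, by
    rintro - ⟨n, rfl⟩
    simpa [abs_of_nonneg (hs n)] using hs_anti n.zero_le⟩

namespace Orthonormal

open Submodule

variable {𝕜 ι E F G H : Type*} [RCLike 𝕜]
  [NormedAddCommGroup E] [InnerProductSpace 𝕜 E] [CompleteSpace E]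
  [NormedAddCommGroup F] [InnerProductSpace 𝕜 F] [CompleteSpace F]
  [NormedAddCommGroup G] [InnerProductSpace 𝕜 G] [CompleteSpace G]
  [NormedAddCommGroup H] [InnerProductSpace 𝕜 H] [CompleteSpace H]
  {u : ι → E} {v : ι → F} {w : ι → G}

def synthesis (hv : Orthonormal 𝕜 v) : ℓ²(ι, 𝕜) →ₗᵢ[𝕜] F :=
  hv.orthogonalFamily.linearIsometry

theorem synthesis_apply (hv : Orthonormal 𝕜 v) (f : ℓ²(ι, 𝕜)) :
    hv.synthesis f = ∑' i, f i • v i := by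
  simp [synthesis, OrthogonalFamily.linearIsometry_apply]

theorem synthesis_single [DecidableEq ι] (hv : Orthonormal 𝕜 v) (i : ι) (a : 𝕜) :
    hv.synthesis (lp.single 2 i a) = a • v i := by
  simp [synthesis, OrthogonalFamily.linearIsometry_apply_single]

theorem isClosed_range_synthesis (hv : Orthonormal 𝕜 v) : IsClosed (Set.range hv.synthesis) :=
  hv.synthesis.isometry.isUniformInducing.isComplete_range.isClosed

theorem range_synthesis (hv : Orthonormal 𝕜 v) :
    LinearMap.range hv.synthesis.toLinearMap = (span 𝕜 (Set.range v)).topologicalClosure := by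
  rw [synthesis, hv.orthogonalFamily.range_linearIsometry]
  simp [← LinearMap.span_singleton_eq_range, ← span_iUnion]

def analysis (hv : Orthonormal 𝕜 v) : F →L[𝕜] ℓ²(ι, 𝕜) :=
  adjoint hv.synthesis.toContinuousLinearMap

theorem analysis_apply (hv : Orthonormal 𝕜 v) (x : F) (i : ι) :
    hv.analysis x i = ⟪v i, x⟫_𝕜 := by
  classical
  have := lp.inner_single_left (𝕜 := 𝕜) (G := fun _ : ι => 𝕜) i 1 (hv.analysis x)
  rw [analysis, adjoint_inner_right] at this
  simpa [analysis, synthesis_single] using this.symm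

@[simp]
theorem analysis_synthesis (hv : Orthonormal 𝕜 v) (f : ℓ²(ι, 𝕜)) :
    hv.analysis (hv.synthesis f) = f :=
  ext_inner_left 𝕜 fun g => by
    rw [analysis, adjoint_inner_right]
    exact hv.synthesis.inner_map_map g f

theorem norm_analysis_le_one (hv : Orthonormal 𝕜 v) : ‖hv.analysis‖ ≤ 1 := by
  rw [analysis, LinearIsometryEquiv.norm_map]
  exact hv.synthesis.norm_toContinuousLinearMap_le

theorem analysis_eq_zero_of_mem_orthogonal (hv : Orthonormal 𝕜 v) {x : F}
    (hx : x ∈ (span 𝕜 (Set.range v))ᗮ) : hv.analysis x = 0 :=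
  lp.ext <| funext fun i => by
    rw [analysis_apply]
    exact (mem_orthogonal _ _).mp hx _ (subset_span ⟨i, rfl⟩)

theorem norm_analysis_comp_comp_synthesis_le {κ : Type*} {w' : κ → G} (hv : Orthonormal 𝕜 v)
    (hw : Orthonormal 𝕜 w') (T : F →L[𝕜] G) :
    ‖hw.analysis ∘L T ∘L hv.synthesis.toContinuousLinearMap‖ ≤ ‖T‖ :=
  calc _ ≤ ‖hw.analysis‖ * (‖T‖ * ‖hv.synthesis.toContinuousLinearMap‖) :=
        (opNorm_comp_le _ _).trans (by gcongr; exact opNorm_comp_le _ _)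
    _ ≤ 1 * (‖T‖ * 1) := by
        gcongr
        exacts [hw.norm_analysis_le_one, hv.synthesis.norm_toContinuousLinearMap_le]
    _ = ‖T‖ := by ring

def diagonalOperator (hv : Orthonormal 𝕜 v) (hw : Orthonormal 𝕜 w) (c : ℓ^∞(ι, 𝕜)) : F →L[𝕜] G :=
  hw.synthesis.toContinuousLinearMap ∘L lp.diagonal c ∘L hv.analysis

theorem diagonalOperator_apply (hv : Orthonormal 𝕜 v) (hw : Orthonormal 𝕜 w) (c : ℓ^∞(ι, 𝕜))
    (x : F) : hv.diagonalOperator hw c x = ∑' i, (c i * ⟪v i, x⟫_𝕜) • w i := by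
  simp [diagonalOperator, synthesis_apply, analysis_apply]

theorem diagonalOperator_comp_diagonalOperator (hu : Orthonormal 𝕜 u) (hv : Orthonormal 𝕜 v)
    (hw : Orthonormal 𝕜 w) (c d : ℓ^∞(ι, 𝕜)) :
    hv.diagonalOperator hw c ∘L hu.diagonalOperator hv d = hu.diagonalOperator hw (c * d) := by
  ext x
  simp [diagonalOperator, lp.diagonal_mul]

theorem closure_range_diagonalOperator_subset (hv : Orthonormal 𝕜 v) (hw : Orthonormal 𝕜 w)
    (c : ℓ^∞(ι, 𝕜)) : closure (Set.range (hv.diagonalOperator hw c)) ⊆ Set.range hw.synthesis :=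
  closure_minimal (by rintro - ⟨x, rfl⟩; exact ⟨_, rfl⟩) hw.isClosed_range_synthesis

theorem orthogonal_ker_diagonalOperator_le (hv : Orthonormal 𝕜 v) (hw : Orthonormal 𝕜 w)
    (c : ℓ^∞(ι, 𝕜)) :
    (LinearMap.ker (hv.diagonalOperator hw c : F →ₗ[𝕜] G))ᗮ ≤
      LinearMap.range hv.synthesis.toLinearMap := by
  rw [range_synthesis, ← orthogonal_orthogonal_eq_closure]
  refine orthogonal_le fun x hx => ?_
  simp [diagonalOperator, analysis_eq_zero_of_mem_orthogonal hv hx]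

theorem norm_diagonalOperator_one_apply (hv : Orthonormal 𝕜 v) (hw : Orthonormal 𝕜 w) {x : F}
    (hx : x ∈ Set.range hv.synthesis) : ‖hv.diagonalOperator hw 1 x‖ = ‖x‖ := by
  obtain ⟨f, rfl⟩ := hx
  simp [diagonalOperator]

theorem le_norm_mul_norm_mul_of_diagonalOperator_eq_comp
    {φ : ℕ → F} {ψ : ℕ → G} {φ' : ℕ → E} {ψ' : ℕ → H} (hφ : Orthonormal 𝕜 φ)
    (hψ : Orthonormal 𝕜 ψ) (hφ' : Orthonormal 𝕜 φ') (hψ' : Orthonormal 𝕜 ψ')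
    {c c' : ℓ^∞(ℕ, 𝕜)} {n : ℕ} {r r' : ℝ} (hc : ∀ j, n ≤ j → ‖c j‖ ≤ r) (hr' : 0 ≤ r')
    (hc' : ∀ j ≤ n, r' ≤ ‖c' j‖) (T : G →L[𝕜] H) (S : E →L[𝕜] F)
    (h : hφ'.diagonalOperator hψ' c' = T ∘L hφ.diagonalOperator hψ c ∘L S) :
    r' ≤ ‖T‖ * ‖S‖ * r := by
  set P := hψ'.analysis ∘L T ∘L hψ.synthesis.toContinuousLinearMap
  set Q := hφ.analysis ∘L S ∘L hφ'.synthesis.toContinuousLinearMap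
  have hPQ : lp.diagonal c' = P ∘L lp.diagonal c ∘L Q := by
    ext f : 1
    simpa [diagonalOperator, P, Q] using congr(hψ'.analysis ($h (hφ'.synthesis f)))
  have hr : 0 ≤ r := (norm_nonneg _).trans (hc n le_rfl)
  calc r' ≤ ‖P‖ * ‖Q‖ * r := lp.le_norm_mul_norm_mul_of_diagonal_eq_comp hc hr' hc' P Q hPQ
    _ ≤ ‖T‖ * ‖S‖ * r := by
        gcongr
        exacts [norm_analysis_comp_comp_synthesis_le hψ hψ' T,
          norm_analysis_comp_comp_synthesis_le hφ' hφ S]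

section Factorization

variable {φ : ι → F} {ψ : ι → G} {φ' : ι → E} {ψ' : ι → H} {c c' q : ℓ^∞(ι, 𝕜)}

theorem exists_eq_isometric_comp_comp_of_eq_mul (hφ : Orthonormal 𝕜 φ) (hψ : Orthonormal 𝕜 ψ)
    (hφ' : Orthonormal 𝕜 φ') (hψ' : Orthonormal 𝕜 ψ') (hq : c' = c * q) :
    ∃ (O : G →L[𝕜] H) (S : E →L[𝕜] F),
      (∀ y ∈ closure (Set.range (hφ.diagonalOperator hψ c)), ‖O y‖ = ‖y‖) ∧
        hφ'.diagonalOperator hψ' c' = O ∘L (hφ.diagonalOperator hψ c ∘L S) := by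
  refine ⟨hψ.diagonalOperator hψ' 1, hφ'.diagonalOperator hφ q, fun y hy => ?_, ?_⟩
  · exact hψ.norm_diagonalOperator_one_apply hψ'
      (hφ.closure_range_diagonalOperator_subset hψ c hy)
  · rw [diagonalOperator_comp_diagonalOperator, diagonalOperator_comp_diagonalOperator, one_mul,
      hq]

theorem exists_eq_comp_comp_isometric_of_eq_mul (hφ : Orthonormal 𝕜 φ) (hψ : Orthonormal 𝕜 ψ)
    (hφ' : Orthonormal 𝕜 φ') (hψ' : Orthonormal 𝕜 ψ') (hq : c' = c * q) :
    ∃ (T : G →L[𝕜] H) (U : E →L[𝕜] F),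
      (∀ x ∈ (LinearMap.ker (hφ'.diagonalOperator hψ' c' : E →ₗ[𝕜] H))ᗮ, ‖U x‖ = ‖x‖) ∧
        hφ'.diagonalOperator hψ' c' = T ∘L (hφ.diagonalOperator hψ c ∘L U) := by
  refine ⟨hψ.diagonalOperator hψ' q, hφ'.diagonalOperator hφ 1, fun x hx => ?_, ?_⟩
  · exact hφ'.norm_diagonalOperator_one_apply hφ
      (hφ'.orthogonal_ker_diagonalOperator_le hψ' c' hx)
  · rw [diagonalOperator_comp_diagonalOperator, diagonalOperator_comp_diagonalOperator, mul_one,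
      mul_comm, hq]

end Factorization

end Orthonormal

end

theorem orderings_equivalent_compact_general
    {𝕜 X Y X' Y' : Type*} [RCLike 𝕜]
    [NormedAddCommGroup X] [InnerProductSpace 𝕜 X] [CompleteSpace X]
    [NormedAddCommGroup Y] [InnerProductSpace 𝕜 Y] [CompleteSpace Y]
    [NormedAddCommGroup X'] [InnerProductSpace 𝕜 X'] [CompleteSpace X']
    [NormedAddCommGroup Y'] [InnerProductSpace 𝕜 Y'] [CompleteSpace Y']
    (A : X →L[𝕜] Y) (A' : X' →L[𝕜] Y')
    (σ σ' : ℕ → ℝ) (φ : ℕ → X) (ψ : ℕ → Y) (φ' : ℕ → X') (ψ' : ℕ → Y')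
    (hσpos : ∀ n, 0 < σ n) (hσanti : Antitone σ)
    (hσ'pos : ∀ n, 0 < σ' n) (hσ'anti : Antitone σ')
    (hφ : Orthonormal 𝕜 φ) (hψ : Orthonormal 𝕜 ψ)
    (hφ' : Orthonormal 𝕜 φ') (hψ' : Orthonormal 𝕜 ψ')
    (hArep : ∀ x : X, A x = ∑' n : ℕ, ((σ n : 𝕜) * (inner 𝕜 (φ n) x : 𝕜)) • ψ n)
    (hA'rep : ∀ x : X', A' x = ∑' n : ℕ, ((σ' n : 𝕜) * (inner 𝕜 (φ' n) x : 𝕜)) • ψ' n) :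
    List.TFAE
      [ (∃ (T : Y →L[𝕜] Y') (S : X' →L[𝕜] X), A' = T ∘L (A ∘L S)),
        (∃ (O : Y →L[𝕜] Y') (S : X' →L[𝕜] X),
          (∀ y ∈ closure (Set.range ⇑A), ‖O y‖ = ‖y‖) ∧ A' = O ∘L (A ∘L S)),
        (∃ (T : Y →L[𝕜] Y') (U : X' →L[𝕜] X),
          (∀ x ∈ (LinearMap.ker (A' : X' →ₗ[𝕜] Y'))ᗮ, ‖U x‖ = ‖x‖) ∧ A' = T ∘L (A ∘L U)),
        (∃ C : ℝ, 0 < C ∧ ∀ n, σ' n ≤ C * σ n) ] := by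
  have hnorm : ∀ {s : ℕ → ℝ}, (∀ n, 0 < s n) → ∀ n, ‖(s n : 𝕜)‖ = s n := fun hs n => by
    rw [RCLike.norm_ofReal, abs_of_pos (hs n)]
  let a : ℓ^∞(ℕ, 𝕜) := ⟨_, memℓp_infty_ofReal_of_antitone (fun n => (hσpos n).le) hσanti⟩
  let a' : ℓ^∞(ℕ, 𝕜) := ⟨_, memℓp_infty_ofReal_of_antitone (fun n => (hσ'pos n).le) hσ'anti⟩
  obtain rfl : A = hφ.diagonalOperator hψ a :=
    ext fun x => by rw [hArep, Orthonormal.diagonalOperator_apply]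
  obtain rfl : A' = hφ'.diagonalOperator hψ' a' :=
    ext fun x => by rw [hA'rep, Orthonormal.diagonalOperator_apply]
  have factor : (∃ C : ℝ, 0 < C ∧ ∀ n, σ' n ≤ C * σ n) → ∃ q : ℓ^∞(ℕ, 𝕜), a' = a * q :=
    fun ⟨C, _, hC⟩ => lp.exists_eq_mul_of_norm_le_mul_norm (C := C)
      (fun n => RCLike.ofReal_ne_zero.mpr (hσpos n).ne') fun n => by
        simpa [a, a', hnorm hσpos, hnorm hσ'pos] using hC n
  tfae_have 2 → 1 := fun ⟨O, S, _, h⟩ => ⟨O, S, h⟩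
  tfae_have 3 → 1 := fun ⟨T, U, _, h⟩ => ⟨T, U, h⟩
  tfae_have 1 → 4 := by
    rintro ⟨T, S, h⟩
    refine ⟨‖T‖ * ‖S‖ + 1, by positivity, fun n => ?_⟩
    have := hφ.le_norm_mul_norm_mul_of_diagonalOperator_eq_comp hψ hφ' hψ' (n := n)
      (fun j hj => (hnorm hσpos j).trans_le (hσanti hj)) (hσ'pos n).le
      (fun j hj => (hσ'anti hj).trans_eq (hnorm hσ'pos j).symm) T S h
    nlinarith [hσpos n]
  tfae_have 4 → 2 := fun h4 =>
    have ⟨_, hq⟩ := factor h4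
    hφ.exists_eq_isometric_comp_comp_of_eq_mul hψ hφ' hψ' hq
  tfae_have 4 → 3 := fun h4 =>
    have ⟨_, hq⟩ := factor h4
    hφ.exists_eq_comp_comp_isometric_of_eq_mul hψ hφ' hψ' hq
  tfae_finish

/-- Theorem 5 (compact case): for compact ill-posed operators with infinite-rank singular value
decompositions, the orderings `≤_{B,B}`, `≤_{O,B}`, `≤_{B,O}` and the singular-value ordering
`⪅_{σ,C}` are all equivalent. -/
theorem orderings_equivalent_compact
    {𝕜 X Y X' Y' : Type*} [RCLike 𝕜]
    [NormedAddCommGroup X] [InnerProductSpace 𝕜 X] [CompleteSpace X]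
    [NormedAddCommGroup Y] [InnerProductSpace 𝕜 Y] [CompleteSpace Y]
    [NormedAddCommGroup X'] [InnerProductSpace 𝕜 X'] [CompleteSpace X']
    [NormedAddCommGroup Y'] [InnerProductSpace 𝕜 Y'] [CompleteSpace Y']
    (A : X →L[𝕜] Y) (A' : X' →L[𝕜] Y')
    (hAcompact : IsCompactOperator ⇑A) (hA'compact : IsCompactOperator ⇑A')
    (σ σ' : ℕ → ℝ) (φ : ℕ → X) (ψ : ℕ → Y) (φ' : ℕ → X') (ψ' : ℕ → Y')
    (hσpos : ∀ n, 0 < σ n) (hσanti : Antitone σ) (hσ0 : Tendsto σ atTop (nhds 0))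
    (hσ'pos : ∀ n, 0 < σ' n) (hσ'anti : Antitone σ') (hσ'0 : Tendsto σ' atTop (nhds 0))
    (hφ : Orthonormal 𝕜 φ) (hψ : Orthonormal 𝕜 ψ)
    (hφ' : Orthonormal 𝕜 φ') (hψ' : Orthonormal 𝕜 ψ')
    (hArep : ∀ x : X, A x = ∑' n : ℕ, ((σ n : 𝕜) * (inner 𝕜 (φ n) x : 𝕜)) • ψ n)
    (hA'rep : ∀ x : X', A' x = ∑' n : ℕ, ((σ' n : 𝕜) * (inner 𝕜 (φ' n) x : 𝕜)) • ψ' n) :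
    List.TFAE
      [ (∃ (T : Y →L[𝕜] Y') (S : X' →L[𝕜] X), A' = T ∘L (A ∘L S)),
        (∃ (O : Y →L[𝕜] Y') (S : X' →L[𝕜] X),
          (∀ y ∈ closure (Set.range ⇑A), ‖O y‖ = ‖y‖) ∧ A' = O ∘L (A ∘L S)),
        (∃ (T : Y →L[𝕜] Y') (U : X' →L[𝕜] X),
          (∀ x ∈ (LinearMap.ker (A' : X' →ₗ[𝕜] Y'))ᗮ, ‖U x‖ = ‖x‖) ∧ A' = T ∘L (A ∘L U)),
        (∃ C : ℝ, 0 < C ∧ ∀ n, σ' n ≤ C * σ n) ] :=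
  orderings_equivalent_compact_general A A' σ σ' φ ψ φ' ψ' hσpos hσanti hσ'pos hσ'anti hφ hψ hφ' hψ'
    hArep hA'rep
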